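/- arXiv:1912.12015 — 2 statements merged into one kernel-verified Lean document; each statement's English description precedes it below -/
import Mathlib

section
/- Let k be a field of characteristic p > 0 and g = a ⋊ b the semidirect product Lie algebra with bracket [a + λe, a' + λ'e] = λa' − λ'a, where a is abelian with trivial p-map and b = ke with (λe)^[p] = λ^p e. Then the map (a + λe) ↦ λ^(p-1)(a + λe) is a p-map on g making it a restricted Lie algebra such that the inclusions of a and b are homomorphisms of restricted Lie algebras; moreover, every nonzero vector of g is p-closed. -/
/-- The bracket `[a + λe, a' + λ'e] = λ a' - λ' a` on `g = a ⋊ b`, modelled as `A × k`. -/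
def semiBracket (k : Type*) [Field k] (A : Type*) [AddCommGroup A] [Module k A] :
    (A × k) → (A × k) → (A × k) :=
  fun x y => (x.2 • y.1 - y.2 • x.1, 0)

/-- The p-map `(a + λe)^[p] = λ^(p-1) (a + λe)` on `g = a ⋊ b`, modelled as `A × k`. -/
def semiPmap (k : Type*) [Field k] (A : Type*) [AddCommGroup A] [Module k A] (p : ℕ) :
    (A × k) → (A × k) :=
  fun x => x.2 ^ (p - 1) • x

lemma semiBracket_iter {k : Type*} [Field k] {A : Type*} [AddCommGroup A] [Module k A]
    (x y : A × k) (n : ℕ) (hn : 1 ≤ n) :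
    (semiBracket k A x)^[n] y = ((x.2 ^ n) • y.1 - (x.2 ^ (n - 1) * y.2) • x.1, 0) := by
  induction n with
  | zero => omega
  | succ m ih =>
    rcases Nat.eq_or_lt_of_le hn with h | h
    · simp [← h, semiBracket]
    · have hm : 1 ≤ m := by omega
      rw [Function.iterate_succ_apply', ih hm, semiBracket]
      simp only [Nat.add_sub_cancel]
      ext
      · simp [smul_sub, smul_smul, ← pow_succ']
        ring_nf
        congr 1
        conv_rhs => rw [show m = m - 1 + 1 by omega]
        ring
      · simp

/-- The map `(a + λe) ↦ λ^(p-1) (a + λe)` is a p-map on `g = a ⋊ b`: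
it satisfies `(c x)^[p] = c^p x^[p]` and `[x^[p], y] = (ad_x)^p (y)`, it restricts to the
trivial p-map on `a` and to `(λ e)^[p] = λ^p e` on `b` (so both inclusions are homomorphisms
of restricted Lie algebras), and every nonzero vector of `g` is p-closed. -/
theorem semiDirect_pmap_restricted
    {k : Type*} [Field k] (p : ℕ) [Fact p.Prime] [CharP k p]
    {A : Type*} [AddCommGroup A] [Module k A] [FiniteDimensional k A] :
    (∀ (c : k) (x : A × k), semiPmap k A p (c • x) = c ^ p • semiPmap k A p x) ∧
    (∀ x y : A × k, semiBracket k A (semiPmap k A p x) y = (semiBracket k A x)^[p] y) ∧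
    (∀ a : A, semiPmap k A p ((a, 0) : A × k) = 0) ∧
    (∀ lam : k, semiPmap k A p ((0, lam) : A × k) = ((0 : A), lam ^ p)) ∧
    (∀ x : A × k, x ≠ 0 → ∃ c : k, semiPmap k A p x = c • x) := by
  have hp : 1 ≤ p := (Fact.out : p.Prime).one_lt.le
  have hpp : p - 1 + 1 = p := Nat.succ_pred_eq_of_pos hp
  refine ⟨?_, ?_, ?_, ?_, ?_⟩
  · intro c x
    simp only [semiPmap, Prod.smul_snd, smul_eq_mul, mul_pow, smul_smul]
    rw [show c ^ p = c ^ (p - 1) * c by rw [← pow_succ, hpp]]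
    ring_nf
  · intro x y
    rw [semiBracket_iter x y p hp]
    simp only [semiPmap, semiBracket, Prod.smul_snd, Prod.smul_fst, smul_eq_mul]
    ext
    · simp only [smul_smul]
      rw [show x.2 ^ (p - 1) * x.2 = x.2 ^ p by rw [← pow_succ, hpp]]
      simp [mul_comm]
    · simp
  · intro a
    simp [semiPmap, zero_pow (by have := (Fact.out : p.Prime).two_le; omega : p - 1 ≠ 0)]
  · intro lam
    simp [semiPmap, Prod.smul_def, ← pow_succ, hpp]
  · intro x _
    exact ⟨x.2 ^ (p - 1), rfl⟩
end

section
/- Let k be a field of characteristic 2 and δ the derivation of k[u⁻¹, v⁻¹] given by δ = P(u⁻¹)·D_{u⁻¹} + Q(v⁻¹)·D_{v⁻¹} where P(x) = λ₄x⁴ + λ₂x² + τx + λ₀ and Q(y) = μ₄y⁴ + μ₂y² + τy + μ₀. Then the elements a = u⁻², b = v⁻², and c = τu⁻¹v⁻¹ + Q₀(v⁻¹)u⁻¹ + P₀(u⁻¹)v⁻¹, where P₀(x) = λ₄x⁴ + λ₂x² + λ₀ and Q₀(y) = μ₄y⁴ + μ₂y² + μ₀, are all annihilated by δ (i.e.,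 lie in the kernel of δ). -/
open MvPolynomial

/-- Over a field `k` of characteristic 2, the derivation
`δ = P(x)·∂/∂x + Q(y)·∂/∂y` of `k[x, y]` (with `x = u⁻¹`, `y = v⁻¹`),
where `P(x) = λ₄x⁴ + λ₂x² + τx + λ₀` and `Q(y) = μ₄y⁴ + μ₂y² + τy + μ₀`, annihilates
the elements `a = x²`, `b = y²` and `c = τxy + Q₀(y)x + P₀(x)y`, where
`P₀(x) = λ₄x⁴ + λ₂x² + λ₀` and `Q₀(y) = μ₄y⁴ + μ₂y² + μ₀`. -/
theorem kernel_elements_of_delta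
    {k : Type*} [Field k] [CharP k 2]
    (lam0 lam2 lam4 mu0 mu2 mu4 tau : k) :
    ∀ P Q P0 Q0 : MvPolynomial (Fin 2) k,
      P = C lam4 * X 0 ^ 4 + C lam2 * X 0 ^ 2 + C tau * X 0 + C lam0 →
      Q = C mu4 * X 1 ^ 4 + C mu2 * X 1 ^ 2 + C tau * X 1 + C mu0 →
      P0 = C lam4 * X 0 ^ 4 + C lam2 * X 0 ^ 2 + C lam0 →
      Q0 = C mu4 * X 1 ^ 4 + C mu2 * X 1 ^ 2 + C mu0 →
      ∀ δ : MvPolynomial (Fin 2) k → MvPolynomial (Fin 2) k,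
        (∀ f, δ f = P * pderiv 0 f + Q * pderiv 1 f) →
        δ (X 0 ^ 2) = 0 ∧ δ (X 1 ^ 2) = 0 ∧
        δ (C tau * X 0 * X 1 + Q0 * X 0 + P0 * X 1) = 0 := by
  intro P Q P0 Q0 hP hQ hP0 hQ0 δ hδ
  have h2 : (2 : MvPolynomial (Fin 2) k) = 0 := by
    have : ((2:ℕ) : MvPolynomial (Fin 2) k) = 0 := CharP.cast_eq_zero _ 2
    simpa using this
  subst hP hQ hP0 hQ0
  refine ⟨?_, ?_, ?_⟩
  · rw [hδ]
    simp [pderiv_X, Pi.single_apply]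
    ring_nf
    exact Or.inr h2
  · rw [hδ]
    simp [pderiv_X, Pi.single_apply]
    ring_nf
    exact Or.inr h2
  · rw [hδ]
    simp only [map_add, map_mul, pderiv_X, pderiv_C, Derivation.leibniz_pow,
      Pi.single_apply, Fin.isValue]
    simp [pderiv_X, Pi.single_apply]
    linear_combination
      ((C lam4 * X 0 ^ 4 + C lam2 * X 0 ^ 2 + C lam0 + C tau * X 0) *
        (C mu4 * X 1 ^ 4 + C mu2 * X 1 ^ 2 + C mu0 + C tau * X 1) +
       (C lam4 * X 0 ^ 4 + C lam2 * X 0 ^ 2 + C tau * X 0 + C lam0) *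
        (2 * C lam4 * X 0 ^ 3 + C lam2 * X 0) * X 1 +
       (C mu4 * X 1 ^ 4 + C mu2 * X 1 ^ 2 + C tau * X 1 + C mu0) *
        (2 * C mu4 * X 1 ^ 3 + C mu2 * X 1) * X 0 : MvPolynomial (Fin 2) k) * h2
end
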